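/- arXiv:1610.03357 — 7 statements merged into one kernel-verified Lean document; each statement's English description precedes it below -/
import Mathlib

section
/- With C_k^{i_1,...,i_n} as above, in the Weyl algebra A_n(ℂ) one has ∏_{j=0}^{k-1} (Σ_{i=1}^n x_i ∂/∂x_i + j + n) = Σ_{i_1+...+i_n=k} C_k^{i_1,...,i_n} (∂/∂x_1)^{i_1}···(∂/∂x_n)^{i_n} x_1^{i_1}···x_n^{i_n} (i.e., the transposed identity, with derivatives on the left and monomials on the right). -/
/-!
Write `L = ∑ₘ ∂ₘ xₘ`, which equals `∑ₘ xₘ ∂ₘ + n`, and `P_i = ∂^i x^i`. Commuting `∂ₘ` to the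
left through `x^i` costs `Mx (∂ₘ x^i)`, and `(∂ₘ x^i) xₘ = iₘ x^i`; hence
`P_i ∂ₘ xₘ = P_{i+eₘ} - iₘ P_i`, and summing over `m`, `P_i (L + |i|) = ∑ₘ P_{i+eₘ}`.
For `S_k = ∑_{|i|=k} C_k^i P_i` this gives `S_k (L + k) = S_{k+1}` exactly by the recurrence
for `C`, while `S_1 = L`; the product formula follows by induction on `k`.
-/

open MvPolynomial Finset

/-- The Weyl algebra `A_n(ℂ)` realized faithfully as operators on `ℂ[x₁,…,xₙ]` :
multiplication by a polynomial. -/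
noncomputable def Mx (n : ℕ) (q : MvPolynomial (Fin n) ℂ) :
    Module.End ℂ (MvPolynomial (Fin n) ℂ) := LinearMap.mulLeft ℂ q

noncomputable def Dx (n : ℕ) (i : Fin n) : Module.End ℂ (MvPolynomial (Fin n) ℂ) :=
  (pderiv i : Derivation ℂ (MvPolynomial (Fin n) ℂ) (MvPolynomial (Fin n) ℂ))

theorem List.prod_map_pow_add_single {ι M : Type*} [Monoid M] [DecidableEq ι] {f : ι → M}
    (i : ι → ℕ) {m : ι} {l : List ι} (hl : l.Nodup) (hm : m ∈ l)
    (hf : ∀ a ∈ l, Commute (f a) (f m)) :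
    (l.map fun a => f a ^ (i + Pi.single m 1 : ι → ℕ) a).prod
      = (l.map fun a => f a ^ i a).prod * f m := by
  induction l with
  | nil => simp at hm
  | cons a t ih =>
    obtain ⟨hat, ht⟩ := List.nodup_cons.mp hl
    simp only [List.map_cons, List.prod_cons]
    by_cases ham : a = m
    · subst ham
      have htail : (t.map fun b => f b ^ (i + Pi.single a 1 : ι → ℕ) b)
          = t.map fun b => f b ^ i b :=
        List.map_congr_left fun b hb => by
          rw [Pi.add_apply, Pi.single_eq_of_ne (ne_of_mem_of_not_mem hb hat), add_zero]
      have hcomm : Commute (f a) (t.map fun b => f b ^ i b).prod :=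
        Commute.list_prod_right _ _ fun x hx => by
          obtain ⟨b, hb, rfl⟩ := List.mem_map.mp hx
          exact (hf b (List.mem_cons_of_mem a hb)).symm.pow_right _
      rw [htail, Pi.add_apply, Pi.single_eq_same, pow_succ, mul_assoc, hcomm.eq, mul_assoc]
    · have hmt : m ∈ t := (List.mem_cons.mp hm).resolve_left (Ne.symm ham)
      rw [Pi.add_apply, Pi.single_eq_of_ne ham, add_zero,
        ih ht hmt fun b hb => hf b (List.mem_cons_of_mem a hb), mul_assoc]

theorem Fin.prod_pow_add_single {n : ℕ} {M : Type*} [CommMonoid M] (f : Fin n → M)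
    (i : Fin n → ℕ) (m : Fin n) :
    ∏ a, f a ^ (i + Pi.single m 1 : Fin n → ℕ) a = (∏ a, f a ^ i a) * f m := by
  simp only [Fin.prod_univ_def]
  exact List.prod_map_pow_add_single i (List.nodup_finRange n) (List.mem_finRange m)
    fun a _ => Commute.all _ _

theorem MvPolynomial.X_mul_pderiv_prod_X_pow {σ R : Type*} [Fintype σ] [CommSemiring R]
    (i : σ → ℕ) (m : σ) :
    X m * pderiv m (∏ a, (X a : MvPolynomial σ R) ^ i a)
      = i m • ∏ a, (X a : MvPolynomial σ R) ^ i a := by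
  have hmono : ∏ a, (X a : MvPolynomial σ R) ^ i a
      = monomial (Finsupp.equivFunOnFinite.symm i) 1 := by
    rw [monomial_eq, C_1, one_mul, Finsupp.prod_fintype _ _ fun _ => pow_zero _]
    rfl
  rw [hmono, X_mul_pderiv_monomial]
  rfl

section PiAntidiag

variable {ι M : Type*} [DecidableEq ι]

theorem update_add_single_sub_one (i : ι → ℕ) (m : ι) :
    Function.update (i + Pi.single m 1) m ((i + Pi.single m 1 : ι → ℕ) m - 1) = i := by
  funext a
  rcases eq_or_ne a m with rfl | ha <;> simp [*]

theorem update_sub_one_add_single {j : ι → ℕ} {m : ι} (hj : j m ≠ 0) :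
    Function.update j m (j m - 1) + Pi.single m 1 = j := by
  funext a
  rcases eq_or_ne a m with rfl | ha
  · rw [Pi.add_apply, Function.update_self, Pi.single_eq_same]
    omega
  · simp [ha]

theorem Pi.single_one_injective : Function.Injective fun m : ι => (Pi.single m 1 : ι → ℕ) :=
  fun a b h => by simpa [Pi.single_apply] using congrFun h a

variable [Fintype ι] [AddCommMonoid M]

theorem sum_piAntidiag_add_single (k : ℕ) (m : ι) (f : (ι → ℕ) → M) :
    ∑ i ∈ piAntidiag univ k, f (i + Pi.single m 1)
      = ∑ j ∈ (piAntidiag univ (k + 1)).filter (fun j => j m ≠ 0), f j := by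
  refine sum_nbij' (· + Pi.single m 1) (fun j => Function.update j m (j m - 1))
    ?_ ?_ (fun i _ => update_add_single_sub_one i m) ?_ fun _ _ => rfl
  · intro i hi
    simp_all [sum_add_distrib]
  · intro j hj
    obtain ⟨hj, hjm⟩ := mem_filter.mp hj
    have hsum : univ.sum (Function.update j m (j m - 1)) + 1 = univ.sum j := by
      conv_rhs => rw [← update_sub_one_add_single hjm]
      simp [sum_add_distrib]
    simp only [mem_piAntidiag, mem_univ, implies_true, and_true] at hj ⊢
    omega
  · intro j hj
    exact update_sub_one_add_single (mem_filter.mp hj).2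

theorem piAntidiag_univ_one :
    piAntidiag univ 1 = univ.map ⟨fun m : ι => Pi.single m 1, Pi.single_one_injective⟩ := by
  ext j
  simp only [mem_piAntidiag, mem_univ, implies_true, and_true, mem_map,
    Function.Embedding.coeFn_mk, true_and]
  constructor
  · intro hj
    obtain ⟨m, hm⟩ := (Finsupp.sum_eq_one_iff (Finsupp.equivFunOnFinite.symm j)).mp
      (by rw [Finsupp.sum_fintype _ _ fun _ => rfl]; exact hj)
    exact ⟨m, by rw [← Finsupp.single_eq_pi_single, ← hm]; rfl⟩
  · rintro ⟨m, rfl⟩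
    simp

theorem le_of_mem_piAntidiag_univ {k : ℕ} {i : ι → ℕ} (hi : i ∈ piAntidiag univ k) (a : ι) :
    i a ≤ k := by
  rw [← (mem_piAntidiag.mp hi).1]
  exact single_le_sum (fun _ _ => Nat.zero_le _) (mem_univ a)

theorem sum_fin_ite_eq_sum_piAntidiag (k : ℕ) (g : (ι → ℕ) → M) :
    ∑ f : ι → Fin (k + 1), (if ∑ m, (f m : ℕ) = k then g (fun m => f m) else 0)
      = ∑ i ∈ piAntidiag univ k, g i := by
  rw [← sum_filter]
  refine sum_bij (fun f _ m => f m) (fun f hf => by simpa using hf)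
    (fun f _ f' _ h => funext fun m => Fin.ext (congrFun h m))
    (fun i hi => ⟨fun m => ⟨i m, Nat.lt_succ_of_le (le_of_mem_piAntidiag_univ hi m)⟩,
      by simpa using hi, rfl⟩) fun _ _ => rfl

end PiAntidiag

section Weyl

variable (n : ℕ)

theorem Mx_mul (p q : MvPolynomial (Fin n) ℂ) : Mx n (p * q) = Mx n p * Mx n q :=
  map_mul (Algebra.lmul ℂ _) p q

theorem Mx_one : Mx n 1 = 1 := map_one (Algebra.lmul ℂ _)

theorem Dx_commute (a b : Fin n) : Commute (Dx n a) (Dx n b) := by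
  have hbracket : ⁅(pderiv a : Derivation ℂ (MvPolynomial (Fin n) ℂ) _), pderiv b⁆ = 0 :=
    derivation_ext fun c => by
      rw [Derivation.commutator_apply]
      simp only [pderiv_X, Pi.single_apply]
      split_ifs <;> simp
  have := congrArg (fun D : Derivation ℂ (MvPolynomial (Fin n) ℂ) _ =>
    (D : MvPolynomial (Fin n) ℂ →ₗ[ℂ] MvPolynomial (Fin n) ℂ)) hbracket
  simp only [Derivation.commutator_coe_linear_map, Ring.lie_def] at this
  exact sub_eq_zero.mp this

theorem Dx_mul_Mx (m : Fin n) (p : MvPolynomial (Fin n) ℂ) :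
    Dx n m * Mx n p = Mx n p * Dx n m + Mx n (pderiv m p) := by
  ext q
  simp [Dx, Mx, mul_comm]

noncomputable def shiftedEuler : Module.End ℂ (MvPolynomial (Fin n) ℂ) :=
  ∑ m, Dx n m * Mx n (X m)

theorem sum_Mx_X_mul_Dx_add_eq_shiftedEuler :
    (∑ i, Mx n (X i) * Dx n i) + (n : ℂ) • 1 = shiftedEuler n := by
  simp [shiftedEuler, Dx_mul_Mx, Mx_one, sum_add_distrib, Nat.cast_smul_eq_nsmul]

noncomputable def dMonomial (i : Fin n → ℕ) : Module.End ℂ (MvPolynomial (Fin n) ℂ) :=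
  ((List.finRange n).map fun m => Dx n m ^ i m).prod

noncomputable def xMonomial (i : Fin n → ℕ) : Module.End ℂ (MvPolynomial (Fin n) ℂ) :=
  Mx n (∏ m, X m ^ i m)

noncomputable def weylMonomial (i : Fin n → ℕ) : Module.End ℂ (MvPolynomial (Fin n) ℂ) :=
  dMonomial n i * xMonomial n i

theorem dMonomial_add_single (i : Fin n → ℕ) (m : Fin n) :
    dMonomial n (i + Pi.single m 1) = dMonomial n i * Dx n m :=
  List.prod_map_pow_add_single i (List.nodup_finRange n) (List.mem_finRange m)
    fun a _ => Dx_commute n a m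

theorem xMonomial_add_single (i : Fin n → ℕ) (m : Fin n) :
    xMonomial n (i + Pi.single m 1) = xMonomial n i * Mx n (X m) := by
  rw [xMonomial, xMonomial, Fin.prod_pow_add_single, Mx_mul]

theorem weylMonomial_zero : weylMonomial n 0 = 1 := by
  simp [weylMonomial, dMonomial, xMonomial, Mx_one]

theorem weylMonomial_mul_Dx_mul_Mx_X (i : Fin n → ℕ) (m : Fin n) :
    weylMonomial n i * (Dx n m * Mx n (X m))
      = weylMonomial n (i + Pi.single m 1) - i m • weylMonomial n i := by
  have hcomm : xMonomial n i * Dx n m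
      = Dx n m * xMonomial n i - Mx n (pderiv m (∏ a, X a ^ i a)) :=
    eq_sub_of_add_eq (Dx_mul_Mx n m _).symm
  have hderiv : Mx n (pderiv m (∏ a, X a ^ i a)) * Mx n (X m) = i m • xMonomial n i := by
    rw [← Mx_mul, mul_comm, X_mul_pderiv_prod_X_pow]
    exact map_nsmul (Algebra.lmul ℂ _) _ _
  calc weylMonomial n i * (Dx n m * Mx n (X m))
      = dMonomial n i * (xMonomial n i * Dx n m) * Mx n (X m) := by
        simp only [weylMonomial, mul_assoc]
    _ = dMonomial n i * Dx n m * (xMonomial n i * Mx n (X m))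
          - dMonomial n i * (Mx n (pderiv m (∏ a, X a ^ i a)) * Mx n (X m)) := by
        rw [hcomm]
        simp only [mul_sub, sub_mul, mul_assoc]
    _ = weylMonomial n (i + Pi.single m 1) - i m • weylMonomial n i := by
        rw [hderiv, weylMonomial, weylMonomial, dMonomial_add_single, xMonomial_add_single,
          mul_smul_comm]

theorem weylMonomial_single (m : Fin n) :
    weylMonomial n (Pi.single m 1) = Dx n m * Mx n (X m) := by
  simpa [weylMonomial_zero] using (weylMonomial_mul_Dx_mul_Mx_X n 0 m).symm

theorem weylMonomial_mul_shiftedEuler_add {k : ℕ} (i : Fin n → ℕ) (hi : ∑ m, i m = k) :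
    weylMonomial n i * (shiftedEuler n + (k : ℂ) • 1)
      = ∑ m, weylMonomial n (i + Pi.single m 1) := by
  rw [shiftedEuler, mul_add, mul_sum,
    sum_congr rfl fun m _ => weylMonomial_mul_Dx_mul_Mx_X n i m, sum_sub_distrib,
    ← sum_smul, hi, mul_smul_comm, mul_one, Nat.cast_smul_eq_nsmul, sub_add_cancel]

theorem sum_smul_weylMonomial_mul_shiftedEuler_add (c : (Fin n → ℕ) → ℂ) (k : ℕ) :
    (∑ i ∈ piAntidiag univ k, c i • weylMonomial n i) * (shiftedEuler n + (k : ℂ) • 1)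
      = ∑ j ∈ piAntidiag univ (k + 1),
          (∑ m, if j m = 0 then 0 else c (Function.update j m (j m - 1))) •
            weylMonomial n j := by
  calc _ = ∑ i ∈ piAntidiag univ k, ∑ m, c i • weylMonomial n (i + Pi.single m 1) := by
        refine sum_mul _ _ _ |>.trans <| sum_congr rfl fun i hi => ?_
        rw [smul_mul_assoc, weylMonomial_mul_shiftedEuler_add n i (mem_piAntidiag.mp hi).1,
          smul_sum]
    _ = ∑ m, ∑ j ∈ (piAntidiag univ (k + 1)).filter (fun j => j m ≠ 0),
          c (Function.update j m (j m - 1)) • weylMonomial n j := by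
        rw [sum_comm]
        refine sum_congr rfl fun m _ => ?_
        rw [← sum_piAntidiag_add_single k m
          fun j => c (Function.update j m (j m - 1)) • weylMonomial n j]
        simp only [update_add_single_sub_one]
    _ = _ := by
        simp only [sum_filter, sum_smul, ite_smul, zero_smul]
        rw [sum_comm]
        simp only [ite_not]

noncomputable def weylSum (Cc : ℕ → (Fin n → ℕ) → ℤ) (k : ℕ) :
    Module.End ℂ (MvPolynomial (Fin n) ℂ) :=
  ∑ i ∈ piAntidiag univ k, (Cc k i : ℂ) • weylMonomial n i

variable (Cc : ℕ → (Fin n → ℕ) → ℤ)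

theorem weylSum_one (hbase : ∀ m : Fin n, Cc 1 (Pi.single m 1) = 1) :
    weylSum n Cc 1 = shiftedEuler n := by
  simp [weylSum, shiftedEuler, piAntidiag_univ_one, hbase, weylMonomial_single]

theorem weylSum_mul_shiftedEuler_add (k : ℕ)
    (hrec : ∀ i : Fin n → ℕ, ∑ m, i m = k + 1 →
      Cc (k + 1) i = ∑ m, if i m = 0 then 0 else Cc k (Function.update i m (i m - 1))) :
    weylSum n Cc k * (shiftedEuler n + (k : ℂ) • 1) = weylSum n Cc (k + 1) := by
  rw [weylSum, sum_smul_weylMonomial_mul_shiftedEuler_add, weylSum]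
  refine sum_congr rfl fun j hj => ?_
  rw [hrec j (mem_piAntidiag.mp hj).1]
  push_cast [apply_ite]
  rfl

theorem prod_range_shiftedEuler_add {k : ℕ} (hk : 1 ≤ k)
    (hbase : ∀ m : Fin n, Cc 1 (Pi.single m 1) = 1)
    (hrec : ∀ K : ℕ, 2 ≤ K → ∀ i : Fin n → ℕ, (∑ m, i m) = K →
      Cc K i = ∑ m : Fin n,
        if i m = 0 then 0 else Cc (K - 1) (Function.update i m (i m - 1))) :
    ((List.range k).map fun j : ℕ => shiftedEuler n + (j : ℂ) • 1).prod = weylSum n Cc k := by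
  induction k, hk using Nat.le_induction with
  | base => simp [weylSum_one n Cc hbase]
  | succ k hk ih =>
    rw [List.prod_range_succ, ih,
      weylSum_mul_shiftedEuler_add n Cc k fun i hi => hrec (k + 1) (by omega) i hi]

end Weyl

/-- Statement 0: if the integers `C_k^{i₁,…,iₙ}` satisfy the recurrence
`C_k^{i₁,…,iₙ} = ∑_m C_{k-1}^{…,i_m-1,…}` (terms with a negative index being zero)
with `C_1` equal to `1` on the standard basis tuples, then in the Weyl algebra
`∏_{j=0}^{k-1} (∑ᵢ xᵢ∂ᵢ + j + n) = ∑_{i₁+⋯+iₙ=k} C_k^{i₁,…,iₙ} ∂₁^{i₁}⋯∂ₙ^{iₙ} x₁^{i₁}⋯xₙ^{iₙ}`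
(the transposed identity). -/
theorem stmt1 (n k : ℕ) (hk : 1 ≤ k) (Cc : ℕ → (Fin n → ℕ) → ℤ)
    (hbase : ∀ m : Fin n, Cc 1 (Pi.single m 1) = 1)
    (hrec : ∀ K : ℕ, 2 ≤ K → ∀ i : Fin n → ℕ, (∑ m, i m) = K →
      Cc K i = ∑ m : Fin n,
        if i m = 0 then 0 else Cc (K - 1) (Function.update i m (i m - 1))) :
    ((List.range k).map
        (fun j => (∑ i, Mx n (X i) * Dx n i) + ((j : ℂ) + (n : ℂ)) • (1 : Module.End ℂ (MvPolynomial (Fin n) ℂ)))).prod =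
      ∑ f : Fin n → Fin (k + 1),
        if (∑ m, (f m : ℕ)) = k then
          ((Cc k (fun m => (f m : ℕ)) : ℂ) •
            (((List.finRange n).map (fun m => Dx n m ^ (f m : ℕ))).prod *
              Mx n (∏ m, X m ^ (f m : ℕ))))
        else 0 := by
  have hshift (c : ℂ) : (∑ i, Mx n (X i) * Dx n i) + (c + n) • 1
      = shiftedEuler n + c • (1 : Module.End ℂ (MvPolynomial (Fin n) ℂ)) := by
    rw [← sum_Mx_X_mul_Dx_add_eq_shiftedEuler, add_smul]
    abel
  -- `(j : ℂ)` makes `List.range k` a `List ℂ`, coerced through the list monad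
  simp only [List.pure_def, List.bind_eq_flatMap, ← List.map_eq_flatMap, List.map_map,
    Function.comp_def, hshift]
  rw [prod_range_shiftedEuler_add n Cc hk hbase hrec, weylSum]
  exact (sum_fin_ite_eq_sum_piAntidiag k fun i => (Cc k i : ℂ) • weylMonomial n i).symm
end

section
/- Let l_1,...,l_p be linear forms on ℂ^n, let i ∈ {1,...,p}, and let ({i}, I, J) be a partition of {1,...,p} with |I| = n−1 such that the family (l_j)_{j ∈ I ∪ {i}} is a basis of the dual space. Let U_{i,J} be the unique constant vector field with U_{i,J}(l_i) = 1 and U_{i,J}(l_k) = 0 for k ∈ I, and let l_K denote ∏_{k∈K} l_k. Then the operator Ũ_{i,J} = l_i l_J U_{i,J} − l_J s_i − l_i Σ_{j∈J} l_{J∖{j}} U_{i,J}(l_j) s_j annihilates l_1^{s_1}···l_p^{s_p}, i.e., Ũ_{i,J}(l_1^{s_1}···l_p^{s_p}) = 0. -/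
open MvPolynomial

namespace Paper

/-- The ring `ℂ[x₁,…,xₙ, s₁,…,s_p, y]`; variable `some (Sum.inl i)` is `xᵢ`,
`some (Sum.inr j)` is `sⱼ`, and `none` is `y`, destined to be `1/(l₁⋯l_p)`. -/
abbrev A (n p : ℕ) := MvPolynomial (Option (Fin n ⊕ Fin p)) ℂ

variable (n p : ℕ)

noncomputable def xv (i : Fin n) : A n p := X (some (Sum.inl i))
noncomputable def sv (j : Fin p) : A n p := X (some (Sum.inr j))
noncomputable def yv : A n p := X none

/-- A linear form on `ℂⁿ`, given by its coefficients, as a polynomial. -/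
noncomputable def lf (c : Fin n → ℂ) : A n p := ∑ i, MvPolynomial.C (c i) * xv n p i

/-- The value of a constant vector field `u` on a linear form with coefficients `c`. -/
noncomputable def ap {n : ℕ} (u c : Fin n → ℂ) : ℂ := ∑ m, u m * c m

/-- A family of linear forms is generic if every subfamily of `n` of them is
linearly independent. -/
def Generic {n p : ℕ} (l : Fin p → Fin n → ℂ) : Prop :=
  ∀ S : Finset (Fin p), S.card = n → LinearIndependent ℂ (fun i : S => l i.1)

variable (l : Fin p → Fin n → ℂ)

/-- The product `H = l₁ ⋯ l_p`. -/
noncomputable def Hp : A n p := ∏ j, lf n p (l j)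

/-- The relation `y·H = 1` presenting the localization `ℂ[x,s][1/H]`. -/
noncomputable def RI : Ideal (A n p) := Ideal.span {yv n p * Hp n p l - 1}

/-- The ring `ℂ[x,s][1/(l₁⋯l_p)]`, i.e. the free module generated by the symbol
`l₁^{s₁}⋯l_p^{s_p}`. -/
abbrev Rm := A n p ⧸ RI n p l

noncomputable def pr : A n p →ₐ[ℂ] Rm n p l := Ideal.Quotient.mkₐ ℂ _

/-- The constant-coefficient derivation of `A` in the direction `u`, extended to the
localization variable `y` by `∂y = -y²·∂(H)`. -/
noncomputable def d0 (u : Fin n → ℂ) : Derivation ℂ (A n p) (A n p) :=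
  mkDerivation ℂ fun v =>
    Option.casesOn v 0 (fun w => Sum.casesOn w (fun m => (MvPolynomial.C (u m) : A n p)) fun _ => 0)

noncomputable def dA (u : Fin n → ℂ) : Derivation ℂ (A n p) (A n p) :=
  d0 n p u + (-(yv n p) ^ 2 * d0 n p u (Hp n p l)) • pderiv none

lemma pd_none_lf (c : Fin n → ℂ) : pderiv none (lf n p c) = 0 := by
  simp [lf, xv, pderiv_X_of_ne]

lemma pd_none_Hp : pderiv none (Hp n p l) = 0 := by
  have key : ∀ s : Finset (Fin p), pderiv none (∏ j ∈ s, lf n p (l j)) = 0 := by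
    intro s
    induction s using Finset.induction_on with
    | empty => simp
    | @insert a s h ih =>
        rw [Finset.prod_insert h, Derivation.leibniz]
        simp [ih, pd_none_lf]
  exact key Finset.univ

lemma d0_yv (u : Fin n → ℂ) : d0 n p u (yv n p) = 0 := by
  simp [d0, yv, mkDerivation_X]

lemma d0_Xnone (u : Fin n → ℂ) : d0 n p u (X none : A n p) = 0 := by
  simp [d0, mkDerivation_X]

lemma dA_gen (u : Fin n → ℂ) :
    dA n p l u (yv n p * Hp n p l - 1) =
      (-(yv n p) * d0 n p u (Hp n p l)) * (yv n p * Hp n p l - 1) := by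
  have h1 : dA n p l u (yv n p) = -(yv n p) ^ 2 * d0 n p u (Hp n p l) := by
    simp [dA, d0_Xnone, yv, smul_eq_mul]
  have h2 : dA n p l u (Hp n p l) = d0 n p u (Hp n p l) := by
    simp [dA, pd_none_Hp, smul_eq_mul]
  have : dA n p l u (yv n p * Hp n p l - 1) =
      yv n p • dA n p l u (Hp n p l) + Hp n p l • dA n p l u (yv n p) := by
    rw [map_sub, Derivation.leibniz]
    simp
  rw [this, h1, h2]
  ring_nf

lemma dA_mem (u : Fin n → ℂ) :
    (RI n p l).restrictScalars ℂ ≤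
      ((RI n p l).restrictScalars ℂ).comap ((dA n p l u) : A n p →ₗ[ℂ] A n p) := by
  intro z hz
  simp only [Submodule.restrictScalars_mem] at hz ⊢
  rw [Submodule.mem_comap]
  simp only [Derivation.coeFn_coe]
  rw [RI, Ideal.mem_span_singleton] at hz
  obtain ⟨t, rfl⟩ := hz
  rw [Derivation.leibniz]
  simp only [Submodule.restrictScalars_mem, smul_eq_mul]
  rw [RI]
  apply Ideal.add_mem
  · exact Ideal.mul_mem_right _ _ (Ideal.subset_span (Set.mem_singleton _))
  · apply Ideal.mul_mem_left
    rw [dA_gen, Ideal.mem_span_singleton]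
    exact Dvd.intro_left _ rfl

/-- The (untwisted) action of the derivation in direction `u` on `ℂ[x,s][1/H]`. -/
noncomputable def dR (u : Fin n → ℂ) : Module.End ℂ (Rm n p l) :=
  (Submodule.Quotient.restrictScalarsEquiv ℂ (RI n p l)).toLinearMap ∘ₗ
    Submodule.mapQ _ _ ((dA n p l u) : A n p →ₗ[ℂ] A n p) (dA_mem n p l u) ∘ₗ
      (Submodule.Quotient.restrictScalarsEquiv ℂ (RI n p l)).symm.toLinearMap

/-- Multiplication by (the image of) a polynomial, as an operator on the symbol module. -/
noncomputable def Mop (a : A n p) : Module.End ℂ (Rm n p l) :=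
  LinearMap.mulLeft ℂ (pr n p l a)

/-- The twisted action of `∂_u` on the module generated by `l₁^{s₁}⋯l_p^{s_p}` :
`∂_u(g·l^s) = (∂_u g)·l^s + g·(∑ₖ sₖ u(lₖ)/lₖ)·l^s`. -/
noncomputable def Top (u : Fin n → ℂ) : Module.End ℂ (Rm n p l) :=
  dR n p l u +
    Mop n p l (∑ k, sv n p k * MvPolynomial.C (ap u (l k)) * yv n p *
      ∏ m ∈ Finset.univ.erase k, lf n p (l m))

/-- The algebra of operators `𝒟 = A_n(ℂ)[s₁,…,s_p]` acting (twistedly) on the module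
generated by the symbol `l₁^{s₁}⋯l_p^{s_p}` : it is generated by the multiplications by
the `xᵢ` and the `sⱼ` and by the twisted partial derivatives. -/
noncomputable def Dalg : Subalgebra ℂ (Module.End ℂ (Rm n p l)) :=
  Algebra.adjoin ℂ
    ((Set.range fun i => Mop n p l (xv n p i)) ∪
     (Set.range fun j => Mop n p l (sv n p j)) ∪
     (Set.range fun i : Fin n => Top n p l (Pi.single i 1)))

/-!
In `ℂ[x, s][1/(l₁⋯l_p)]` the operator `U` sends the symbol to `∑ₖ sₖ U(lₖ)/lₖ` times it, and
`U(lₖ) = 0` for `k ∈ I`, `U(lᵢ) = 1`. Multiplying by `lᵢ l_J` clears every remaining denominator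
`lₖ`, `k ∈ {i} ∪ J`, leaving exactly `l_J sᵢ + lᵢ ∑_{j∈J} l_{J∖{j}} U(l_j) s_j`.
-/

/-- Clearing the denominators of `∑ₖ cₖ / Lₖ` when `y` inverts `∏ₖ Lₖ` and `c` is supported
on `K`. -/
theorem _root_.Finset.prod_mul_sum_mul_prod_erase_of_mul_prod_eq_one {ι R : Type*} [CommRing R]
    [Fintype ι] [DecidableEq ι] {L : ι → R} {y : R} (hy : y * ∏ k, L k = 1)
    (K : Finset ι) (c : ι → R) (hc : ∀ k ∉ K, c k = 0) :
    (∏ k ∈ K, L k) * ∑ k, c k * y * ∏ m ∈ Finset.univ.erase k, L m =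
      ∑ k ∈ K, c k * ∏ m ∈ K.erase k, L m := by
  rw [← Finset.sum_subset (Finset.subset_univ K) fun k _ hk => by simp [hc k hk],
    Finset.mul_sum]
  refine Finset.sum_congr rfl fun k hk => ?_
  calc (∏ m ∈ K, L m) * (c k * y * ∏ m ∈ Finset.univ.erase k, L m)
      = c k * (∏ m ∈ K.erase k, L m) * (y * (L k * ∏ m ∈ Finset.univ.erase k, L m)) := by
        rw [← Finset.mul_prod_erase K L hk]; ring
    _ = c k * ∏ m ∈ K.erase k, L m := by
        rw [Finset.mul_prod_erase _ L (Finset.mem_univ k), hy, mul_one]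

lemma pr_yv_mul_prod_lf : pr n p l (yv n p) * ∏ k, pr n p l (lf n p (l k)) = 1 := by
  rw [← map_prod, ← map_mul, ← sub_eq_zero, ← map_one (pr n p l), ← map_sub]
  exact Ideal.Quotient.eq_zero_iff_mem.mpr (Ideal.subset_span rfl)

lemma dR_pr (u : Fin n → ℂ) (a : A n p) :
    dR n p l u (pr n p l a) = pr n p l (dA n p l u a) := rfl

lemma Top_one (u : Fin n → ℂ) :
    Top n p l u 1 = ∑ k, pr n p l (sv n p k) * algebraMap ℂ _ (ap u (l k)) * pr n p l (yv n p) *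
      ∏ m ∈ Finset.univ.erase k, pr n p l (lf n p (l m)) := by
  rw [Top, LinearMap.add_apply, ← map_one (pr n p l), dR_pr, Derivation.map_one_eq_zero]
  simp [Mop]

theorem stmt2_general (n p : ℕ) (l : Fin p → Fin n → ℂ)
    (i : Fin p) (Iset Jset : Finset (Fin p))
    (hiJ : i ∉ Jset)
    (hcover : insert i (Iset ∪ Jset) = Finset.univ)
    (u : Fin n → ℂ) (hu1 : ap u (l i) = 1) (hu0 : ∀ k ∈ Iset, ap u (l k) = 0) :
    (Mop n p l (lf n p (l i) * ∏ k ∈ Jset, lf n p (l k)) * Top n p l u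
      - Mop n p l ((∏ k ∈ Jset, lf n p (l k)) * sv n p i)
      - ∑ j ∈ Jset, ap u (l j) •
          Mop n p l (lf n p (l i) * (∏ k ∈ Jset.erase j, lf n p (l k)) * sv n p j))
      (1 : Rm n p l) = 0 := by
  classical
  have hsupp : ∀ k ∉ insert i Jset,
      pr n p l (sv n p k) * algebraMap ℂ (Rm n p l) (ap u (l k)) = 0 := by
    intro k hk
    have hkI : k ∈ Iset := by
      have hk' := hcover ▸ Finset.mem_univ k
      simp only [Finset.mem_insert, Finset.mem_union] at hk hk'
      tauto
    rw [hu0 k hkI, map_zero, mul_zero]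
  have key := Finset.prod_mul_sum_mul_prod_erase_of_mul_prod_eq_one (pr_yv_mul_prod_lf n p l)
    (insert i Jset) _ hsupp
  rw [Finset.prod_insert hiJ, Finset.sum_insert hiJ, Finset.erase_insert hiJ, hu1, map_one,
    mul_one] at key
  have hJ : ∀ j ∈ Jset,
      pr n p l (sv n p j) * algebraMap ℂ (Rm n p l) (ap u (l j)) *
          ∏ m ∈ (insert i Jset).erase j, pr n p l (lf n p (l m)) =
        algebraMap ℂ (Rm n p l) (ap u (l j)) * (pr n p l (lf n p (l i)) *
          (∏ m ∈ Jset.erase j, pr n p l (lf n p (l m))) * pr n p l (sv n p j)) := fun j hj => by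
    rw [Finset.erase_insert_of_ne (ne_of_mem_of_not_mem hj hiJ).symm,
      Finset.prod_insert fun h => hiJ (Finset.mem_of_mem_erase h)]
    ring
  -- the quotient's `ℂ`-action is `Algebra.smul_def` only up to unfolding, so `rw` cannot use it
  have hsmul (c : ℂ) (x : Rm n p l) : c • x = algebraMap ℂ _ c * x := Algebra.smul_def c x
  simp only [LinearMap.sub_apply, Module.End.mul_apply, LinearMap.sum_apply,
    LinearMap.smul_apply, Top_one, Mop, LinearMap.mulLeft_apply, mul_one, map_mul, map_prod, key,
    hsmul, Finset.sum_congr rfl hJ]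
  ring

/-- for a partition `({i}, I, J)` of `{1,…,p}` with `|I| = n−1` and
`(l_j)_{j∈I∪{i}}` a basis, the operator
`Ũ_{i,J} = lᵢ l_J U_{i,J} − l_J sᵢ − lᵢ ∑_{j∈J} l_{J∖{j}} U_{i,J}(l_j) s_j`
annihilates the symbol `l₁^{s₁}⋯l_p^{s_p}`. -/
theorem stmt2 (n p : ℕ) (l : Fin p → Fin n → ℂ)
    (i : Fin p) (Iset Jset : Finset (Fin p))
    (hiI : i ∉ Iset) (hiJ : i ∉ Jset) (hIJ : Disjoint Iset Jset)
    (hcover : insert i (Iset ∪ Jset) = Finset.univ)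
    (hcard : Iset.card = n - 1)
    (hbasis : LinearIndependent ℂ (fun k : (insert i Iset : Finset (Fin p)) => l k.1))
    (u : Fin n → ℂ) (hu1 : ap u (l i) = 1) (hu0 : ∀ k ∈ Iset, ap u (l k) = 0) :
    (Mop n p l (lf n p (l i) * ∏ k ∈ Jset, lf n p (l k)) * Top n p l u
      - Mop n p l ((∏ k ∈ Jset, lf n p (l k)) * sv n p i)
      - ∑ j ∈ Jset, ap u (l j) •
          Mop n p l (lf n p (l i) * (∏ k ∈ Jset.erase j, lf n p (l k)) * sv n p j))
      (1 : Rm n p l) = 0 :=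
  stmt2_general n p l i Iset Jset hiJ hcover u hu1 hu0

end Paper
end

section
/- Let l_1,...,l_{n+1} be generic linear forms on ℂ^n and let E = Σ_{i=1}^n x_i ∂/∂x_i be the Euler vector field. Then for every k ∈ {1,...,n+1}, E = Σ_{i≠k, 1≤i≤n+1} l_i U_{i,k}. In particular, applying both sides to l_k: l_k = Σ_{i≠k} U_{i,k}(l_k) l_i. -/
/-- A family of linear forms on `ℂⁿ` (given by coefficient vectors) is generic if
every subfamily of `n` of them is linearly independent. -/
def Generic {n p : ℕ} (l : Fin p → Fin n → ℂ) : Prop :=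
  ∀ S : Finset (Fin p), S.card = n → LinearIndependent ℂ (fun i : S => l i.1)

/-- The value `U(l)` of a constant vector field `u` on the linear form with
coefficient vector `c`. -/
noncomputable def ap {n : ℕ} (u c : Fin n → ℂ) : ℂ := ∑ m, u m * c m

/-- for generic linear forms `l₁,…,l_{n+1}` on `ℂⁿ`, the Euler vector
field (whose value at the point `x` is `x`) satisfies `E = ∑_{i ≠ k} l_i U_{i,k}` for
every `k`, and consequently `l_k = ∑_{i ≠ k} U_{i,k}(l_k) l_i`. -/
theorem stmt6 (n : ℕ) (l : Fin (n + 1) → Fin n → ℂ) (hl : Generic l)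
    (u : Fin (n + 1) → Fin (n + 1) → Fin n → ℂ)
    (hu1 : ∀ a b, a ≠ b → ap (u a b) (l a) = 1)
    (hu0 : ∀ a b, a ≠ b → ∀ k, k ≠ a → k ≠ b → ap (u a b) (l k) = 0)
    (k : Fin (n + 1)) :
    (∀ x : Fin n → ℂ, ∑ i ∈ Finset.univ.erase k, (∑ m, l i m * x m) • u i k = x) ∧
      l k = ∑ i ∈ Finset.univ.erase k, ap (u i k) (l k) • l i := by
  classical
  set S := Finset.univ.erase k with hS
  have hScard : S.card = n := by
    simp [hS, Finset.card_erase_of_mem]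
  have hli := hl S hScard
  have hspan : Submodule.span ℂ (Set.range fun i : S => l i.1) = ⊤ := by
    apply Submodule.eq_top_of_finrank_eq
    rw [finrank_span_eq_card hli]
    simp [Fintype.card_coe, hScard]
  have key : ∀ x : Fin n → ℂ, ∑ i ∈ S, (∑ m, l i m * x m) • u i k = x := by
    intro x
    set w : Fin n → ℂ := (∑ i ∈ S, (∑ m, l i m * x m) • u i k) - x with hw
    have hW : ∀ j : Fin (n + 1), j ∈ S → ∑ m, l j m * w m = 0 := by
      intro j hjS
      have hjk : j ≠ k := Finset.ne_of_mem_erase hjS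
      have expand : ∑ m, l j m * w m
          = (∑ i ∈ S, (∑ m, l i m * x m) * (∑ m, u i k m * l j m))
            - ∑ m, l j m * x m := by
        simp only [hw, Pi.sub_apply, Finset.sum_apply, Pi.smul_apply, smul_eq_mul,
          mul_sub, Finset.sum_sub_distrib]
        congr 1
        simp only [Finset.mul_sum]
        rw [Finset.sum_comm]
        refine Finset.sum_congr rfl fun i _ => ?_
        refine Finset.sum_congr rfl fun m _ => ?_
        ring
      have hiter : ∀ i ∈ S, (∑ m, l i m * x m) * (∑ m, u i k m * l j m)
          = if i = j then ∑ m, l j m * x m else 0 := by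
        intro i hiS
        have hik : i ≠ k := Finset.ne_of_mem_erase hiS
        by_cases hij : i = j
        · subst hij
          have := hu1 i k hik
          simp [ap] at this
          simp [this]
        · have := hu0 i k hik j (Ne.symm hij) hjk
          simp [ap] at this
          simp [hij, this]
      rw [expand, Finset.sum_congr rfl hiter, Finset.sum_ite_eq' S j _, if_pos hjS,
        sub_self]
    let f : (Fin n → ℂ) →ₗ[ℂ] ℂ :=
      { toFun := fun c => ∑ m, c m * w m
        map_add' := by intro a b; simp [add_mul, Finset.sum_add_distrib]
        map_smul' := by intro a b; simp [Finset.mul_sum, mul_assoc] }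
    have hf0 : ∀ c : Fin n → ℂ, f c = 0 := by
      intro c
      have hc : c ∈ Submodule.span ℂ (Set.range fun i : S => l i.1) := by
        rw [hspan]; trivial
      induction hc using Submodule.span_induction with
      | mem c hcm =>
          obtain ⟨⟨j, hjS⟩, rfl⟩ := hcm
          exact hW j hjS
      | zero => simp
      | add a b _ _ ha hb => rw [map_add, ha, hb, add_zero]
      | smul a c _ hc => rw [map_smul, hc, smul_zero]
    have hwz : w = 0 := by
      funext m
      have := hf0 (Pi.single m 1)
      simpa [f, Pi.single_apply, Finset.sum_ite_eq'] using this
    have := sub_eq_zero.mp hwz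
    exact this
  refine ⟨key, ?_⟩
  funext m
  have h1 := congrArg (fun v : Fin n → ℂ => ∑ j, l k j * v j) (key (Pi.single m 1))
  simp only [Finset.sum_apply, Pi.smul_apply, smul_eq_mul, Pi.single_apply,
    mul_ite, mul_one, mul_zero, Finset.sum_ite_eq', Finset.mem_univ, if_true] at h1
  rw [← h1]
  simp only [ap, Finset.sum_apply, Pi.smul_apply, smul_eq_mul, Finset.mul_sum]
  rw [Finset.sum_comm]
  refine Finset.sum_congr rfl fun i _ => ?_
  rw [Finset.sum_mul]
  refine Finset.sum_congr rfl fun j _ => ?_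
  ring
end

section
/- Let l_1,...,l_{n+1} be generic linear forms on ℂ^n. Set Ũ_{i,j} = l_i l_j U_{i,j} − l_j s_i − U_{i,j}(l_j) l_i s_j and Ẽ = E − s_1 − ··· − s_{n+1}. Then for every k ∈ {1,...,n+1}: l_k · Ẽ = Σ_{i≠k, 1≤i≤n+1} Ũ_{i,k} as operators in 𝒟_{ℂ^n}[s_1,...,s_{n+1}]. -/
open MvPolynomial

/-- The ring `ℂ[x₁,…,xₙ,s₁,…,s_{n+1}]`; `Sum.inl i` is `xᵢ`, `Sum.inr j` is `sⱼ`. -/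
abbrev P2 (n : ℕ) := MvPolynomial (Fin n ⊕ Fin (n + 1)) ℂ

/-- The ring `𝒟_{ℂⁿ}[s₁,…,s_{n+1}]` of differential operators with polynomial
coefficients is realized faithfully by its action on `ℂ[x,s]` :
multiplication by a polynomial. -/
noncomputable def M {n : ℕ} (q : P2 n) : Module.End ℂ (P2 n) := LinearMap.mulLeft ℂ q

/-- A linear form on `ℂⁿ` (with coefficient vector `c`) as a polynomial. -/
noncomputable def lfp {n : ℕ} (c : Fin n → ℂ) : P2 n := ∑ m, C (c m) * X (Sum.inl m)

/-- The variable `sⱼ` as a polynomial. -/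
noncomputable def sp {n : ℕ} (j : Fin (n + 1)) : P2 n := X (Sum.inr j)

/-- The constant vector field `u` as a differential operator (a derivation in the
`x`-variables only). -/
noncomputable def Dv {n : ℕ} (u : Fin n → ℂ) : Module.End ℂ (P2 n) :=
  (mkDerivation ℂ (fun v => Sum.casesOn v (fun m => (C (u m) : P2 n)) fun _ => 0) :
    Derivation ℂ (P2 n) (P2 n))

/-- The operator `Ũ_{i,j} = lᵢ lⱼ U_{i,j} − lⱼ sᵢ − U_{i,j}(lⱼ) lᵢ sⱼ`. -/
noncomputable def Ut {n : ℕ} (l : Fin (n + 1) → Fin n → ℂ)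
    (u : Fin (n + 1) → Fin (n + 1) → Fin n → ℂ) (i j : Fin (n + 1)) :
    Module.End ℂ (P2 n) :=
  M (lfp (l i)) * M (lfp (l j)) * Dv (u i j) - M (lfp (l j)) * M (sp i) -
    ap (u i j) (l j) • (M (lfp (l i)) * M (sp j))

/-- The operator `Ẽ = E − s₁ − ⋯ − s_{n+1}`, `E` being the Euler vector field. -/
noncomputable def Et (n : ℕ) : Module.End ℂ (P2 n) :=
  (∑ i : Fin n, M (X (Sum.inl i)) * Dv (Pi.single i 1)) - ∑ k : Fin (n + 1), M (sp k)

/- ### auxiliary lemmas -/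

noncomputable def fv {n : ℕ} (w : Fin n → ℂ) : Fin n ⊕ Fin (n + 1) → P2 n :=
  fun v => Sum.casesOn v (fun m => (C (w m) : P2 n)) fun _ => 0

lemma M_mul {n : ℕ} (p q : P2 n) : M (p * q) = M p * M q := by
  ext r; simp [M, mul_assoc]

lemma M_smul {n : ℕ} (a : ℂ) (p : P2 n) : a • M p = M (C a * p) := by
  ext q; simp [M, smul_eq_C_mul, mul_assoc]

lemma M_sum {n : ℕ} {ι : Type} (S : Finset ι) (p : ι → P2 n) :
    M (∑ i ∈ S, p i) = ∑ i ∈ S, M (p i) := by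
  ext q; simp [M, Finset.sum_mul]

lemma M_deriv {n : ℕ} (p : P2 n) (D : Derivation ℂ (P2 n) (P2 n)) :
    M p * (D : Module.End ℂ (P2 n)) =
      ((p • D : Derivation ℂ (P2 n) (P2 n)) : Module.End ℂ (P2 n)) := by
  ext q; simp [M, smul_eq_mul]

lemma der_coe_sum {n : ℕ} {ι : Type} (S : Finset ι) (D : ι → Derivation ℂ (P2 n) (P2 n)) :
    ((∑ i ∈ S, D i : Derivation ℂ (P2 n) (P2 n)) : Module.End ℂ (P2 n)) =
      ∑ i ∈ S, (D i : Module.End ℂ (P2 n)) := by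
  induction S using Finset.cons_induction with
  | empty => simp
  | cons a s ha ih => simp [Finset.sum_cons, Derivation.coe_add_linearMap, ih]

lemma der_sum_apply {n : ℕ} {ι : Type} (S : Finset ι) (D : ι → Derivation ℂ (P2 n) (P2 n))
    (q : P2 n) : (∑ i ∈ S, D i) q = ∑ i ∈ S, D i q := by
  induction S using Finset.cons_induction with
  | empty => simp
  | cons a s ha ih => simp [Finset.sum_cons, ih]

lemma BA (n : ℕ) (l : Fin (n + 1) → Fin n → ℂ)
    (u : Fin (n + 1) → Fin (n + 1) → Fin n → ℂ)
    (hu1 : ∀ a b, a ≠ b → ap (u a b) (l a) = 1)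
    (hu0 : ∀ a b, a ≠ b → ∀ k, k ≠ a → k ≠ b → ap (u a b) (l k) = 0)
    (k : Fin (n + 1)) (m m' : Fin n) :
    ∑ i ∈ Finset.univ.erase k, u i k m * l i m' = if m = m' then 1 else 0 := by
  set A : Matrix {x : Fin (n+1) // x ≠ k} (Fin n) ℂ := fun i m => l i.1 m with hA
  set B : Matrix (Fin n) {x : Fin (n+1) // x ≠ k} ℂ := fun m i => u i.1 k m with hB
  have hAB : A * B = 1 := by
    ext i j
    rw [Matrix.mul_apply, Matrix.one_apply]
    have : ∑ m'', A i m'' * B m'' j = ap (u j.1 k) (l i.1) := by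
      simp [hA, hB, ap, mul_comm]
    rw [this]
    by_cases h : i = j
    · subst h; simp [hu1 i.1 k i.2]
    · have hij : i.1 ≠ j.1 := fun hh => h (Subtype.ext hh)
      simp [h, hu0 j.1 k j.2 i.1 hij i.2]
  have hBA : B * A = 1 :=
    (Matrix.mul_eq_one_comm_of_equiv (finSuccAboveEquiv k).symm).mp hAB
  have := congrFun (congrFun hBA m) m'
  rw [Matrix.mul_apply, Matrix.one_apply] at this
  rw [← this]
  rw [Finset.sum_subtype (p := fun x : Fin (n+1) => x ≠ k) _ (fun x => by simp)]

lemma key_poly1 (n : ℕ) (l : Fin (n + 1) → Fin n → ℂ)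
    (u : Fin (n + 1) → Fin (n + 1) → Fin n → ℂ) (k : Fin (n + 1))
    (hBA : ∀ m m', ∑ i ∈ Finset.univ.erase k, u i k m * l i m' = if m = m' then 1 else 0)
    (m : Fin n) :
    ∑ i ∈ Finset.univ.erase k, (lfp (l i) : P2 n) * C (u i k m) = X (Sum.inl m) := by
  have : ∀ i, (lfp (l i) : P2 n) * C (u i k m) =
      ∑ m', C (u i k m * l i m') * X (Sum.inl m') := by
    intro i
    rw [lfp, Finset.sum_mul]
    congr 1; funext m'
    rw [map_mul]; ring
  rw [Finset.sum_congr rfl fun i _ => this i, Finset.sum_comm]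
  have : ∀ m', ∑ i ∈ Finset.univ.erase k, C (u i k m * l i m') * X (Sum.inl m') =
      (C (if m = m' then (1:ℂ) else 0) : P2 n) * X (Sum.inl m') := by
    intro m'
    rw [← Finset.sum_mul, ← map_sum, hBA m m']
  rw [Finset.sum_congr rfl fun m' _ => this m']
  simp [apply_ite (C : ℂ → P2 n), ite_mul]

lemma key_poly2 (n : ℕ) (l : Fin (n + 1) → Fin n → ℂ)
    (u : Fin (n + 1) → Fin (n + 1) → Fin n → ℂ) (k : Fin (n + 1))
    (hBA : ∀ m m', ∑ i ∈ Finset.univ.erase k, u i k m * l i m' = if m = m' then 1 else 0) :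
    ∑ i ∈ Finset.univ.erase k, (C (ap (u i k) (l k)) : P2 n) * lfp (l i) = lfp (l k) := by
  have : ∀ i, (C (ap (u i k) (l k)) : P2 n) * lfp (l i) =
      ∑ m, ∑ m', C (u i k m' * l k m' * l i m) * X (Sum.inl m) := by
    intro i
    rw [lfp, Finset.mul_sum]
    congr 1; funext m
    rw [ap, map_sum, Finset.sum_mul]
    exact Finset.sum_congr rfl fun m' _ => by rw [map_mul, map_mul, map_mul]; ring
  rw [Finset.sum_congr rfl fun i _ => this i, Finset.sum_comm, lfp]
  congr 1; funext m
  rw [Finset.sum_comm (γ := Fin (n+1))]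
  have : ∀ m', ∑ i ∈ Finset.univ.erase k, C (u i k m' * l k m' * l i m) * X (Sum.inl m) =
      (C ((if m' = m then (1:ℂ) else 0) * l k m') : P2 n) * X (Sum.inl m) := by
    intro m'
    rw [← Finset.sum_mul, ← map_sum, ← hBA m' m]
    congr 2
    rw [Finset.sum_mul]
    exact Finset.sum_congr rfl fun i _ => by ring
  rw [Finset.sum_congr rfl fun m' _ => this m']
  simp [apply_ite (C : ℂ → P2 n), ite_mul, mul_comm]

lemma keyD (n : ℕ) (l : Fin (n + 1) → Fin n → ℂ)
    (u : Fin (n + 1) → Fin (n + 1) → Fin n → ℂ) (k : Fin (n + 1))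
    (hBA : ∀ m m', ∑ i ∈ Finset.univ.erase k, u i k m * l i m' = if m = m' then 1 else 0) :
    (∑ i ∈ Finset.univ.erase k, M (lfp (l i)) * Dv (u i k) : Module.End ℂ (P2 n)) =
      ∑ m : Fin n, M (X (Sum.inl m)) * Dv (Pi.single m 1) := by
  have hder : (∑ i ∈ Finset.univ.erase k,
        lfp (l i) • (mkDerivation ℂ (fv (u i k)) : Derivation ℂ (P2 n) (P2 n))) =
      ∑ m : Fin n, (X (Sum.inl m) : P2 n) • mkDerivation ℂ (fv (Pi.single m 1)) := by
    apply derivation_ext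
    intro v
    rw [der_sum_apply, der_sum_apply]
    simp only [Derivation.smul_apply, mkDerivation_X]
    cases v with
    | inl m =>
      simp only [fv, smul_eq_mul]
      rw [key_poly1 n l u k hBA m]
      have : ∀ m' : Fin n, (X (Sum.inl m') : P2 n) * (C ((Pi.single m' 1 : Fin n → ℂ) m) : P2 n) =
          if m' = m then (X (Sum.inl m) : P2 n) else 0 := by
        intro m'
        rw [Pi.single_apply]
        by_cases h : m' = m
        · simp [h]
        · have h2 : ¬m = m' := fun hh => h hh.symm
          simp [h, h2]
      rw [Finset.sum_congr rfl fun m' _ => this m']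
      simp
    | inr j =>
      simp [fv]
  calc (∑ i ∈ Finset.univ.erase k, M (lfp (l i)) * Dv (u i k) : Module.End ℂ (P2 n))
      = ((∑ i ∈ Finset.univ.erase k,
          lfp (l i) • (mkDerivation ℂ (fv (u i k)) : Derivation ℂ (P2 n) (P2 n)) :
            Derivation ℂ (P2 n) (P2 n)) : Module.End ℂ (P2 n)) := by
        rw [der_coe_sum]
        exact Finset.sum_congr rfl fun i _ => M_deriv _ _
    _ = ((∑ m : Fin n, (X (Sum.inl m) : P2 n) • mkDerivation ℂ (fv (Pi.single m 1)) :
            Derivation ℂ (P2 n) (P2 n)) : Module.End ℂ (P2 n)) := by rw [hder]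
    _ = ∑ m : Fin n, M (X (Sum.inl m)) * Dv (Pi.single m 1) := by
        rw [der_coe_sum]
        exact Finset.sum_congr rfl fun m _ => (M_deriv _ _).symm


/-- for generic `l₁,…,l_{n+1}`, for every `k`,
`l_k·Ẽ = ∑_{i≠k} Ũ_{i,k}` in `𝒟_{ℂⁿ}[s₁,…,s_{n+1}]`. -/
theorem stmt8 (n : ℕ) (l : Fin (n + 1) → Fin n → ℂ) (hl : Generic l)
    (u : Fin (n + 1) → Fin (n + 1) → Fin n → ℂ)
    (hu1 : ∀ a b, a ≠ b → ap (u a b) (l a) = 1)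
    (hu0 : ∀ a b, a ≠ b → ∀ k, k ≠ a → k ≠ b → ap (u a b) (l k) = 0)
    (k : Fin (n + 1)) :
    M (lfp (l k)) * Et n = ∑ i ∈ Finset.univ.erase k, Ut l u i k := by
  have hBA := BA n l u hu1 hu0 k
  have hE : M (lfp (l k)) * ∑ m : Fin n, M (X (Sum.inl m)) * Dv (Pi.single m 1)
      = ∑ i ∈ Finset.univ.erase k, M (lfp (l i)) * M (lfp (l k)) * Dv (u i k) := by
    rw [← keyD n l u k hBA, Finset.mul_sum]
    refine Finset.sum_congr rfl fun i _ => ?_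
    rw [← mul_assoc, ← M_mul, mul_comm (lfp (l k)), M_mul]
  have h2 : M (lfp (l k)) * M (sp k)
      = ∑ i ∈ Finset.univ.erase k, ap (u i k) (l k) • (M (lfp (l i)) * M (sp k)) := by
    have : ∀ i, ap (u i k) (l k) • (M (lfp (l i)) * M (sp k))
        = M ((C (ap (u i k) (l k)) : P2 n) * lfp (l i)) * M (sp k) := by
      intro i
      rw [← smul_mul_assoc, M_smul]
    rw [Finset.sum_congr rfl fun i _ => this i, ← Finset.sum_mul, ← M_sum,
      key_poly2 n l u k hBA]
  have hS : M (lfp (l k)) * ∑ j : Fin (n + 1), M (sp j)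
      = (∑ i ∈ Finset.univ.erase k, M (lfp (l k)) * M (sp i))
        + ∑ i ∈ Finset.univ.erase k, ap (u i k) (l k) • (M (lfp (l i)) * M (sp k)) := by
    rw [← Finset.add_sum_erase _ _ (Finset.mem_univ k), mul_add, Finset.mul_sum, h2]
    exact add_comm _ _
  have hUt : ∑ i ∈ Finset.univ.erase k, Ut l u i k
      = (∑ i ∈ Finset.univ.erase k, M (lfp (l i)) * M (lfp (l k)) * Dv (u i k))
        - (∑ i ∈ Finset.univ.erase k, M (lfp (l k)) * M (sp i))
        - ∑ i ∈ Finset.univ.erase k, ap (u i k) (l k) • (M (lfp (l i)) * M (sp k)) := by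
    simp only [Ut, Finset.sum_sub_distrib]
  rw [Et, mul_sub, hE, hS, hUt]
  abel
end

section
/- With l_1,...,l_{n+1} generic linear forms on ℂ^n, let I be the left ideal of 𝒟_{ℂ^n}[s_1,...,s_{n+1}] generated by Ẽ and all Ũ_{i,j} for distinct i,j ∈ {1,...,n+1}, and let J be the left ideal generated by Ẽ and the Ũ_{i,j} for 2 ≤ i < j ≤ n+1 only. Then I = J. -/
open MvPolynomial

/-- The subalgebra of operators `𝒟_{ℂⁿ}[s₁,…,s_{n+1}]` : generated by the
multiplications by the variables and by the partial derivatives `∂/∂xᵢ`. -/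
noncomputable def Dops (n : ℕ) : Subalgebra ℂ (Module.End ℂ (P2 n)) :=
  Algebra.adjoin ℂ
    ((Set.range fun v : Fin n ⊕ Fin (n + 1) => M (X v)) ∪
      (Set.range fun i : Fin n => Dv (Pi.single i 1)))

/-- The left ideal of `𝒟_{ℂⁿ}[s₁,…,s_{n+1}]` generated by a set `S` of operators:
finite sums `∑ cᵣ gᵣ` with coefficients `cᵣ ∈ 𝒟` and `gᵣ ∈ S`. -/
def LId (n : ℕ) (S : Set (Module.End ℂ (P2 n))) : Set (Module.End ℂ (P2 n)) :=
  {x | ∃ (m : ℕ) (c g : Fin m → Module.End ℂ (P2 n)),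
    (∀ r, c r ∈ Dops n ∧ g r ∈ S) ∧ x = ∑ r, c r * g r}


/-! For each `j`, the hypotheses on `u` say that the constant vector fields `U_{i,j}` (`i ≠ j`)
form the basis dual to the linear forms `lᵢ` (`i ≠ j`). Expanding in these dual bases gives
`∑_{i ≠ j} lᵢ U_{i,j} = E` and `∑_{i ≠ j} U_{i,j}(lⱼ) lᵢ = lⱼ`, whence `lⱼ Ẽ = ∑_{i ≠ j} Ũ_{i,j}`;
it also gives `U_{i,j} = U_{i,j}(lⱼ) U_{j,i}`, whence `Ũ_{i,j} = U_{i,j}(lⱼ) Ũ_{j,i}`.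
So every `Ũ_{i,j}` with `i, j ≠ 1` is a multiple of a generator of `J`, and
`Ũ_{1,j} = lⱼ Ẽ - ∑_{i ≠ 1, j} Ũ_{i,j}` lies in `J` as well. -/

open Finset Matrix

theorem sum_mul_eq_ite_of_dotProduct_eq_ite {ι κ K : Type*} [CommRing K] [Fintype κ]
    [DecidableEq ι] [DecidableEq κ] {s : Finset ι} (hs : #s = Fintype.card κ)
    {a b : ι → κ → K} (hab : ∀ i ∈ s, ∀ k ∈ s, b i ⬝ᵥ a k = if i = k then 1 else 0)
    (m m' : κ) : ∑ i ∈ s, b i m * a i m' = if m = m' then 1 else 0 := by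
  let A : Matrix s κ K := of fun k m => a k m
  let B : Matrix κ s K := of fun m i => b i m
  have hAB : A * B = 1 := by
    ext k i
    simp only [A, B, mul_apply, one_apply, of_apply, eq_comm (a := k), Subtype.ext_iff,
      ← hab i i.2 k k.2, dotProduct, mul_comm]
  have hBA := (mul_eq_one_comm_of_card_eq _ _ _ (by simp [hs])).mp hAB
  simpa [A, B, mul_apply, one_apply, sum_attach s (fun i => b i m * a i m')] using
    congrFun (congrFun hBA m) m'

theorem eq_zero_of_dotProduct_eq_zero {ι κ K : Type*} [CommRing K] [Fintype κ]
    [DecidableEq ι] [DecidableEq κ] {s : Finset ι} (hs : #s = Fintype.card κ)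
    {a b : ι → κ → K} (hab : ∀ i ∈ s, ∀ k ∈ s, b i ⬝ᵥ a k = if i = k then 1 else 0)
    {v : κ → K} (hv : ∀ i ∈ s, v ⬝ᵥ a i = 0) : v = 0 := by
  ext m
  calc v m = ∑ m', (∑ i ∈ s, b i m * a i m') * v m' := by
        simp [sum_mul_eq_ite_of_dotProduct_eq_ite hs hab]
    _ = ∑ i ∈ s, b i m * (v ⬝ᵥ a i) := by
        simp only [dotProduct, sum_mul, mul_sum]
        rw [sum_comm]
        exact sum_congr rfl fun i _ => sum_congr rfl fun m' _ => by ring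
    _ = 0 := sum_eq_zero fun i hi => by rw [hv i hi, mul_zero]

section DualFamily

variable {n : ℕ}

def IsDualFamily (l : Fin (n + 1) → Fin n → ℂ) (u : Fin (n + 1) → Fin (n + 1) → Fin n → ℂ) :
    Prop :=
  ∀ ⦃i j k⦄, i ≠ j → k ≠ j → ap (u i j) (l k) = if i = k then 1 else 0

variable {l : Fin (n + 1) → Fin n → ℂ} {u : Fin (n + 1) → Fin (n + 1) → Fin n → ℂ}

theorem isDualFamily_of_ap (hu1 : ∀ a b, a ≠ b → ap (u a b) (l a) = 1)
    (hu0 : ∀ a b, a ≠ b → ∀ k, k ≠ a → k ≠ b → ap (u a b) (l k) = 0) :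
    IsDualFamily l u := by
  intro i j k hij hkj
  split_ifs with hik
  · exact hik ▸ hu1 i j hij
  · exact hu0 i j hij k (Ne.symm hik) hkj

theorem sum_erase_mul_eq_ite (hu : IsDualFamily l u) (j : Fin (n + 1)) (m m' : Fin n) :
    ∑ i ∈ univ.erase j, u i j m * l i m' = if m = m' then 1 else 0 :=
  sum_mul_eq_ite_of_dotProduct_eq_ite (by simp) (b := fun i => u i j)
    (fun _ hi _ hk => hu (ne_of_mem_erase hi) (ne_of_mem_erase hk)) m m'

theorem sum_erase_lfp_mul_C (hu : IsDualFamily l u) (j : Fin (n + 1)) (m : Fin n) :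
    ∑ i ∈ univ.erase j, lfp (l i) * C (u i j m) = X (Sum.inl m) := by
  calc ∑ i ∈ univ.erase j, lfp (l i) * C (u i j m)
      = ∑ k, C (∑ i ∈ univ.erase j, u i j m * l i k) * X (Sum.inl k) := by
        simp only [lfp, sum_mul, map_sum, map_mul]
        rw [sum_comm]
        exact sum_congr rfl fun k _ => sum_congr rfl fun i _ => by ring
    _ = X (Sum.inl m) := by simp [sum_erase_mul_eq_ite hu]

theorem sum_erase_C_mul_lfp (hu : IsDualFamily l u) (j : Fin (n + 1)) :
    ∑ i ∈ univ.erase j, C (ap (u i j) (l j)) * lfp (l i) = lfp (l j) := by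
  calc ∑ i ∈ univ.erase j, C (ap (u i j) (l j)) * lfp (l i)
      = ∑ m, C (l j m) * ∑ i ∈ univ.erase j, lfp (l i) * C (u i j m) := by
        simp only [ap, map_sum, map_mul, sum_mul, mul_sum]
        rw [sum_comm]
        exact sum_congr rfl fun m _ => sum_congr rfl fun i _ => by ring
    _ = lfp (l j) := by simp only [sum_erase_lfp_mul_C hu]; rfl

theorem u_eq_smul_u (hu : IsDualFamily l u) {i j : Fin (n + 1)} (hij : i ≠ j) :
    u i j = ap (u i j) (l j) • u j i := by
  refine sub_eq_zero.mp (eq_zero_of_dotProduct_eq_zero (s := univ.erase i) (b := fun k => u k i)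
    (by simp) (fun _ hk _ hk' => hu (ne_of_mem_erase hk) (ne_of_mem_erase hk')) fun k hk => ?_)
  have hki := ne_of_mem_erase hk
  rw [sub_dotProduct, smul_dotProduct, smul_eq_mul]
  change ap (u i j) (l k) - ap (u i j) (l j) * ap (u j i) (l k) = 0
  by_cases hkj : k = j
  · subst hkj
    rw [hu hij.symm hki, if_pos rfl, mul_one, sub_self]
  · rw [hu hij hkj, hu hij.symm hki, if_neg (Ne.symm hki),
      if_neg (Ne.symm hkj), mul_zero, sub_zero]

theorem ap_mul_ap_eq_one (hu : IsDualFamily l u) {i j : Fin (n + 1)} (hij : i ≠ j) :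
    ap (u i j) (l j) * ap (u j i) (l i) = 1 := by
  rw [← show ap (u i j) (l i) = 1 by simpa using hu hij hij]
  conv_rhs => rw [u_eq_smul_u hu hij]
  exact (smul_dotProduct (ap (u i j) (l j)) (u j i) (l i)).symm

end DualFamily

theorem Derivation.sum_apply {R A M ι : Type*} [CommSemiring R] [CommSemiring A] [Algebra R A]
    [AddCommMonoid M] [Module A M] [Module R M] (s : Finset ι) (D : ι → Derivation R A M)
    (a : A) : (∑ i ∈ s, D i) a = ∑ i ∈ s, D i a := by
  rw [← Derivation.coeFnAddMonoidHom_apply, map_sum, Finset.sum_apply]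
  rfl

noncomputable def constDerivation {n : ℕ} (v : Fin n → ℂ) : Derivation ℂ (P2 n) (P2 n) :=
  mkDerivation ℂ (Sum.elim (fun m => C (v m)) 0)

section Operators

variable {n : ℕ} {l : Fin (n + 1) → Fin n → ℂ} {u : Fin (n + 1) → Fin (n + 1) → Fin n → ℂ}

theorem Dv_apply (v : Fin n → ℂ) (q : P2 n) : Dv v q = constDerivation v q := rfl

theorem constDerivation_smul (c : ℂ) (v : Fin n → ℂ) :
    constDerivation (c • v) = c • constDerivation v := by
  refine derivation_ext fun x => ?_
  rcases x with m | k <;> simp [constDerivation, mkDerivation_X, smul_eq_C_mul]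

theorem sum_erase_lfp_smul_constDerivation (hu : IsDualFamily l u) (j : Fin (n + 1)) :
    ∑ i ∈ univ.erase j, lfp (l i) • constDerivation (u i j) =
      ∑ m, (X (Sum.inl m) : P2 n) • constDerivation (Pi.single m 1 : Fin n → ℂ) := by
  refine derivation_ext fun x => ?_
  rcases x with m | k
  · simp only [Derivation.sum_apply, Derivation.smul_apply, constDerivation, mkDerivation_X,
      Sum.elim_inl, smul_eq_mul, sum_erase_lfp_mul_C hu]
    simp [Pi.single_apply]
  · simp [Derivation.sum_apply, constDerivation, mkDerivation_X]

theorem Ut_apply (i j : Fin (n + 1)) (q : P2 n) :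
    Ut l u i j q = lfp (l j) * (lfp (l i) * constDerivation (u i j) q) - lfp (l j) * (sp i * q)
      - C (ap (u i j) (l j)) * lfp (l i) * (sp j * q) := by
  simp only [Ut, M, LinearMap.sub_apply, LinearMap.smul_apply, Module.End.mul_apply,
    LinearMap.mulLeft_apply, Dv_apply, smul_eq_C_mul]
  ring

theorem Et_apply (q : P2 n) :
    Et n q = (∑ m, (X (Sum.inl m) : P2 n) • constDerivation (Pi.single m 1 : Fin n → ℂ)) q
      - (∑ k, sp k) * q := by
  simp [Et, M, Dv_apply, sum_mul, Derivation.sum_apply]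

theorem lfp_mul_Et (hu : IsDualFamily l u) (j : Fin (n + 1)) :
    M (lfp (l j)) * Et n = ∑ i ∈ univ.erase j, Ut l u i j := by
  refine LinearMap.ext fun q => ?_
  rw [Module.End.mul_apply, Et_apply, ← sum_erase_lfp_smul_constDerivation hu j,
    LinearMap.sum_apply, ← add_sum_erase _ _ (mem_univ j)]
  simp only [M, LinearMap.mulLeft_apply, Ut_apply, sum_sub_distrib, ← mul_sum, ← sum_mul]
  rw [Derivation.sum_apply, sum_erase_C_mul_lfp hu]
  simp only [Derivation.smul_apply, smul_eq_mul]
  ring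

theorem Ut_eq_smul_Ut (hu : IsDualFamily l u) {i j : Fin (n + 1)}
    (hij : i ≠ j) : Ut l u i j = ap (u i j) (l j) • Ut l u j i := by
  refine LinearMap.ext fun q => ?_
  have hc := congrArg (C : ℂ → P2 n) (ap_mul_ap_eq_one hu hij)
  rw [map_mul, map_one] at hc
  have hD : constDerivation (u i j) = ap (u i j) (l j) • constDerivation (u j i) := by
    rw [← constDerivation_smul, ← u_eq_smul_u hu hij]
  rw [LinearMap.smul_apply, smul_eq_C_mul, Ut_apply, Ut_apply, hD, Derivation.smul_apply,
    smul_eq_C_mul]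
  linear_combination (lfp (l j) * (sp i * q)) * hc

end Operators

section LeftIdeal

variable {n : ℕ}

theorem LId_eq_span (S : Set (Module.End ℂ (P2 n))) :
    LId n S = Submodule.span (Dops n) S := by
  ext x
  constructor
  · rintro ⟨m, c, g, hcg, rfl⟩
    exact Submodule.sum_mem _ fun r _ =>
      Submodule.smul_mem _ (⟨c r, (hcg r).1⟩ : Dops n) (Submodule.subset_span (hcg r).2)
  · intro hx
    obtain ⟨m, c, g, rfl⟩ := Submodule.mem_span_set'.mp hx
    exact ⟨m, fun r => c r, fun r => g r, fun r => ⟨(c r).2, (g r).2⟩, rfl⟩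

theorem M_mem_Dops (p : P2 n) : M p ∈ Dops n := by
  induction p using MvPolynomial.induction_on with
  | C c =>
    convert (Dops n).algebraMap_mem c
    exact LinearMap.ext fun q => by simp [M, Module.algebraMap_end_apply, smul_eq_C_mul]
  | add p q hp hq =>
    rw [show M (p + q) = M p + M q from map_add (Algebra.lmul ℂ (P2 n)) p q]
    exact add_mem hp hq
  | mul_X p v hp =>
    rw [show M (p * X v) = M p * M (X v) from map_mul (Algebra.lmul ℂ (P2 n)) p (X v)]
    exact mul_mem hp (Algebra.subset_adjoin (Or.inl ⟨v, rfl⟩))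

variable {l : Fin (n + 1) → Fin n → ℂ} {u : Fin (n + 1) → Fin (n + 1) → Fin n → ℂ}

theorem Ut_mem_of_forall_lt (hu : IsDualFamily l u)
    {N : Submodule (Dops n) (Module.End ℂ (P2 n))} (hE : Et n ∈ N)
    (hU : ∀ i j, 0 < i → i < j → Ut l u i j ∈ N) {i j : Fin (n + 1)} (hij : i ≠ j) :
    Ut l u i j ∈ N := by
  have swap : ∀ {i j}, i ≠ j → Ut l u j i ∈ N → Ut l u i j ∈ N := fun hij h =>
    Ut_eq_smul_Ut hu hij ▸ N.smul_of_tower_mem _ h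
  have of_ne_zero : ∀ {i j}, i ≠ 0 → j ≠ 0 → i ≠ j → Ut l u i j ∈ N := fun hi hj hij =>
    hij.lt_or_gt.elim (hU _ _ (Fin.pos_of_ne_zero hi))
      fun hji => swap hij (hU _ _ (Fin.pos_of_ne_zero hj) hji)
  have zero_left : ∀ {j}, j ≠ 0 → Ut l u 0 j ∈ N := fun {j} hj => by
    have hsum : ∑ i ∈ univ.erase j, Ut l u i j ∈ N :=
      lfp_mul_Et hu j ▸ N.smul_mem (⟨_, M_mem_Dops _⟩ : Dops n) hE
    rw [← add_sum_erase _ _ (mem_erase.mpr ⟨hj.symm, mem_univ 0⟩)] at hsum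
    refine ((N.restrictScalars ℂ).add_mem_iff_left (N.sum_mem fun i hi => ?_)).mp hsum
    exact of_ne_zero (ne_of_mem_erase hi) hj (ne_of_mem_erase (mem_of_mem_erase hi))
  rcases eq_or_ne i 0 with rfl | hi
  · exact zero_left hij.symm
  rcases eq_or_ne j 0 with rfl | hj
  · exact swap hij (zero_left hi)
  · exact of_ne_zero hi hj hij

end LeftIdeal

theorem stmt9_general (n : ℕ) (l : Fin (n + 1) → Fin n → ℂ)
    (u : Fin (n + 1) → Fin (n + 1) → Fin n → ℂ)
    (hu1 : ∀ a b, a ≠ b → ap (u a b) (l a) = 1)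
    (hu0 : ∀ a b, a ≠ b → ∀ k, k ≠ a → k ≠ b → ap (u a b) (l k) = 0) :
    LId n ({Et n} ∪ {z | ∃ i j : Fin (n + 1), i ≠ j ∧ z = Ut l u i j}) =
      LId n ({Et n} ∪ {z | ∃ i j : Fin (n + 1), 0 < i ∧ i < j ∧ z = Ut l u i j}) := by
  rw [LId_eq_span, LId_eq_span]
  congr 1
  refine le_antisymm (Submodule.span_le.mpr ?_) (Submodule.span_mono ?_)
  · rintro _ (rfl | ⟨i, j, hij, rfl⟩)
    · exact Submodule.subset_span (Or.inl rfl)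
    · exact Ut_mem_of_forall_lt (isDualFamily_of_ap hu1 hu0) (Submodule.subset_span (Or.inl rfl))
        (fun i j hi hij => Submodule.subset_span (Or.inr ⟨i, j, hi, hij, rfl⟩)) hij
  · rintro _ (rfl | ⟨i, j, -, hij, rfl⟩)
    · exact Or.inl rfl
    · exact Or.inr ⟨i, j, hij.ne, rfl⟩

/-- the left ideal generated by `Ẽ` and all the `Ũ_{i,j}` (`i ≠ j`)
coincides with the left ideal generated by `Ẽ` and the `Ũ_{i,j}` for
`2 ≤ i < j ≤ n+1` only. -/
theorem stmt9 (n : ℕ) (l : Fin (n + 1) → Fin n → ℂ) (hl : Generic l)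
    (u : Fin (n + 1) → Fin (n + 1) → Fin n → ℂ)
    (hu1 : ∀ a b, a ≠ b → ap (u a b) (l a) = 1)
    (hu0 : ∀ a b, a ≠ b → ∀ k, k ≠ a → k ≠ b → ap (u a b) (l k) = 0) :
    LId n ({Et n} ∪ {z | ∃ i j : Fin (n + 1), i ≠ j ∧ z = Ut l u i j}) =
      LId n ({Et n} ∪ {z | ∃ i j : Fin (n + 1), 0 < i ∧ i < j ∧ z = Ut l u i j}) :=
  stmt9_general n l u hu1 hu0
end

section
/- Let i,j,k ∈ {1,...,n+1} be pairwise distinct. Then in 𝒟_{ℂ^n}[s_1,...,s_{n+1}]: l_k Ũ_{i,j} − l_j Ũ_{i,k} = l_i U_{i,j}(l_j) Ũ_{j,k}. -/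
open MvPolynomial

/-!
Genericity of the `l_m` makes a constant vector field determined by its values on any `n` of
them. The field `U_{i,j} - U_{i,k}` takes the same values on the `l_m`, `m ≠ k`, as
`U_{i,j}(l_j) U_{j,k}`, so the two coincide; evaluating on `l_k` gives
`-U_{i,k}(l_k) = U_{i,j}(l_j) U_{j,k}(l_k)`. With these two relations the claimed identity becomes a
polynomial identity once both sides are applied to a polynomial.
-/

open Matrix

lemma ap_eq_dotProduct {n : ℕ} (u c : Fin n → ℂ) : ap u c = u ⬝ᵥ c := rfl

lemma eq_zero_of_dotProduct_eq_zero_of_span_eq_top {R ι ν : Type*} [CommRing R] [Fintype ν]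
    {b : ι → ν → R} (hb : Submodule.span R (Set.range b) = ⊤) {v : ν → R}
    (hv : ∀ i, v ⬝ᵥ b i = 0) : v = 0 :=
  dotProduct_eq_zero v fun w =>
    LinearMap.congr_fun (LinearMap.ext_on_range hb (f := dotProductBilin R R v) (g := 0) hv) w

lemma Generic.span_compl_singleton_eq_top {n : ℕ} {l : Fin (n + 1) → Fin n → ℂ}
    (hl : Generic l) (k : Fin (n + 1)) :
    Submodule.span ℂ (Set.range fun m : ({k}ᶜ : Finset (Fin (n + 1))) => l m) = ⊤ := by
  have hcard : ({k}ᶜ : Finset (Fin (n + 1))).card = n := by simp [Finset.card_compl]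
  exact (hl _ hcard).span_eq_top_of_card_eq_finrank' (by simp)

lemma Generic.eq_zero_of_ap_eq_zero {n : ℕ} {l : Fin (n + 1) → Fin n → ℂ} (hl : Generic l)
    (k : Fin (n + 1)) {v : Fin n → ℂ} (hv : ∀ m, m ≠ k → ap v (l m) = 0) : v = 0 :=
  eq_zero_of_dotProduct_eq_zero_of_span_eq_top (hl.span_compl_singleton_eq_top k)
    fun m => hv m (Finset.mem_compl.mp m.2 ∘ Finset.mem_singleton.mpr)

lemma Dv_add {n : ℕ} (a b : Fin n → ℂ) : Dv (a + b) = Dv a + Dv b := by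
  unfold Dv
  rw [← Derivation.coe_add_linearMap]
  exact congrArg _ (derivation_ext fun v => by cases v <;> simp)

lemma Dv_smul {n : ℕ} (r : ℂ) (a : Fin n → ℂ) : Dv (r • a) = r • Dv a := by
  unfold Dv
  rw [← Derivation.coe_smul_linearMap]
  exact congrArg _ (derivation_ext fun v => by cases v <;> simp [smul_eq_C_mul])

section Frame

variable {n : ℕ} {l : Fin (n + 1) → Fin n → ℂ} {u : Fin (n + 1) → Fin (n + 1) → Fin n → ℂ}

lemma sub_eq_ap_smul (hl : Generic l) (hu1 : ∀ a b, a ≠ b → ap (u a b) (l a) = 1)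
    (hu0 : ∀ a b, a ≠ b → ∀ k, k ≠ a → k ≠ b → ap (u a b) (l k) = 0)
    {i j k : Fin (n + 1)} (hij : i ≠ j) (hik : i ≠ k) (hjk : j ≠ k) :
    u i j - u i k = ap (u i j) (l j) • u j k := by
  refine sub_eq_zero.mp (hl.eq_zero_of_ap_eq_zero k fun m hmk => ?_)
  simp only [ap_eq_dotProduct] at hu1 hu0 ⊢
  simp only [sub_dotProduct, smul_dotProduct, smul_eq_mul]
  rcases eq_or_ne m i with rfl | hmi
  · simp [hu1 _ _ hij, hu1 _ _ hik, hu0 _ _ hjk _ hij hik]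
  rcases eq_or_ne m j with rfl | hmj
  · simp [hu0 _ _ hik _ hij.symm hmk, hu1 _ _ hjk]
  · simp [hu0 _ _ hij _ hmi hmj, hu0 _ _ hik _ hmi hmk, hu0 _ _ hjk _ hmj hmk]

lemma neg_ap_eq_ap_mul_ap (hl : Generic l) (hu1 : ∀ a b, a ≠ b → ap (u a b) (l a) = 1)
    (hu0 : ∀ a b, a ≠ b → ∀ k, k ≠ a → k ≠ b → ap (u a b) (l k) = 0)
    {i j k : Fin (n + 1)} (hij : i ≠ j) (hik : i ≠ k) (hjk : j ≠ k) :
    -ap (u i k) (l k) = ap (u i j) (l j) * ap (u j k) (l k) := by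
  have h := congrArg (· ⬝ᵥ l k) (sub_eq_ap_smul hl hu1 hu0 hij hik hjk)
  simp only [sub_dotProduct, smul_dotProduct, smul_eq_mul, ← ap_eq_dotProduct,
    hu0 _ _ hij k hik.symm hjk.symm, zero_sub] at h
  exact h

end Frame

/-- for pairwise distinct `i,j,k`,
`l_k Ũ_{i,j} − l_j Ũ_{i,k} = l_i U_{i,j}(l_j) Ũ_{j,k}`. -/
theorem stmt10 (n : ℕ) (l : Fin (n + 1) → Fin n → ℂ) (hl : Generic l)
    (u : Fin (n + 1) → Fin (n + 1) → Fin n → ℂ)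
    (hu1 : ∀ a b, a ≠ b → ap (u a b) (l a) = 1)
    (hu0 : ∀ a b, a ≠ b → ∀ k, k ≠ a → k ≠ b → ap (u a b) (l k) = 0)
    (i j k : Fin (n + 1)) (hij : i ≠ j) (hik : i ≠ k) (hjk : j ≠ k) :
    M (lfp (l k)) * Ut l u i j - M (lfp (l j)) * Ut l u i k =
      ap (u i j) (l j) • (M (lfp (l i)) * Ut l u j k) := by
  set c := ap (u i j) (l j)
  have hD : Dv (u i j) = Dv (u i k) + c • Dv (u j k) := by
    rw [← Dv_smul, ← Dv_add, ← sub_eq_ap_smul hl hu1 hu0 hij hik hjk, add_sub_cancel]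
  have hc := congrArg (C : ℂ → P2 n) (neg_ap_eq_ap_mul_ap hl hu1 hu0 hij hik hjk)
  refine LinearMap.ext fun p => ?_
  simp only [Ut, M, hD, LinearMap.sub_apply, LinearMap.add_apply, Module.End.mul_apply,
    LinearMap.smul_apply, LinearMap.mulLeft_apply, smul_eq_C_mul, C_neg, C_mul] at hc ⊢
  linear_combination -(lfp (l i) * lfp (l j) * (sp k * p)) * hc
end

section
/- Let i,j,k ∈ {1,...,n+1} be pairwise distinct. Then in 𝒟_{ℂ^n}[s_1,...,s_{n+1}]: s_j Ũ_{i,k} − s_i Ũ_{j,k} = −l_i U_{i,k} Ũ_{j,k} + l_j U_{j,k} Ũ_{i,k} − U_{j,k}(l_k)(s_k + 1) Ũ_{i,j}. -/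
set_option maxRecDepth 100000
set_option maxHeartbeats 2000000

open MvPolynomial

/- ### Auxiliary lemmas -/

lemma Dv_mul {n : ℕ} (u : Fin n → ℂ) (p q : P2 n) :
    Dv u (p * q) = p * Dv u q + Dv u p * q := by
  simp [Dv, Derivation.leibniz, smul_eq_mul, mul_comm]

lemma Dv_lfp {n : ℕ} (u c : Fin n → ℂ) : Dv u (lfp c) = C (ap u c) := by
  show (mkDerivation ℂ _ : Derivation ℂ (P2 n) (P2 n)) (lfp c) = _
  rw [lfp, map_sum, ap, map_sum C _ _]
  refine Finset.sum_congr rfl fun m _ => ?_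
  rw [Derivation.leibniz, mkDerivation_X, derivation_C, smul_zero, add_zero,
    smul_eq_mul, ← C_mul, mul_comm (c m) (u m)]

lemma Dv_sp {n : ℕ} (u : Fin n → ℂ) (j : Fin (n+1)) : Dv u (sp j) = 0 := by
  simp [Dv, sp, mkDerivation_X]

lemma Dv_C {n : ℕ} (u : Fin n → ℂ) (a : ℂ) : Dv u (C a) = 0 := by
  simp [Dv, derivation_C]

lemma M_apply {n : ℕ} (p q : P2 n) : M p q = p * q := rfl

lemma Dv_comm {n : ℕ} (u v : Fin n → ℂ) (q : P2 n) :
    Dv u (Dv v q) = Dv v (Dv u q) := by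
  have h : ⁅(mkDerivation ℂ (fun w => Sum.casesOn w (fun m => (C (u m) : P2 n)) fun _ => 0) :
      Derivation ℂ (P2 n) (P2 n)),
      (mkDerivation ℂ (fun w => Sum.casesOn w (fun m => (C (v m) : P2 n)) fun _ => 0) :
      Derivation ℂ (P2 n) (P2 n))⁆ = 0 := by
    apply derivation_ext
    intro w
    cases w <;> simp [Derivation.commutator_apply, mkDerivation_X, derivation_C]
  have h2 := congrArg (fun D : Derivation ℂ (P2 n) (P2 n) => D q) h
  simp only [Derivation.commutator_apply, Derivation.zero_apply] at h2
  exact sub_eq_zero.mp h2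

/-- The coefficient functions used in `Dv`. -/
noncomputable def cvec {n : ℕ} (u : Fin n → ℂ) : Fin n ⊕ Fin (n+1) → P2 n :=
  fun w => Sum.casesOn w (fun m => C (u m)) fun _ => 0

lemma Dv_eq {n : ℕ} (u : Fin n → ℂ) :
    Dv u = (mkDerivation ℂ (cvec u) : Derivation ℂ (P2 n) (P2 n)) := rfl

lemma ap_comb {n : ℕ} (x y z : ℂ) (a b c d : Fin n → ℂ) :
    ap (x • a - y • b - z • c) d = x * ap a d - y * ap b d - z * ap c d := by
  simp [ap, Finset.sum_sub_distrib, Finset.mul_sum, mul_assoc, sub_mul]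

lemma ap_single {n : ℕ} (w : Fin n → ℂ) (m : Fin n) : ap w (Pi.single m 1) = w m := by
  rw [ap]
  rw [Finset.sum_eq_single m]
  · simp
  · intro b _ hb; simp [Pi.single_apply, hb]
  · simp

/-- If a vector is `ap`-orthogonal to `n` linearly independent vectors, it is zero. -/
lemma ap_eq_zero_of_orth {n : ℕ} {w : Fin n → ℂ} {ι : Type*} [Fintype ι]
    (v : ι → Fin n → ℂ) (hli : LinearIndependent ℂ v) (hcard : Fintype.card ι = n)
    (h : ∀ t, ap w (v t) = 0) : w = 0 := by
  let φ : (Fin n → ℂ) →ₗ[ℂ] ℂ := ∑ m, w m • LinearMap.proj m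
  have hφ : ∀ c, φ c = ap w c := by
    intro c
    simp [φ, ap, LinearMap.sum_apply, LinearMap.smul_apply, LinearMap.proj_apply,
      smul_eq_mul]
  rcases Nat.eq_zero_or_pos n with h0 | hpos
  · subst h0
    exact funext fun m => absurd m.isLt (by omega)
  have : Nonempty ι := Fintype.card_pos_iff.mp (by omega)
  have hφ0 : φ = 0 := by
    apply Module.Basis.ext (basisOfLinearIndependentOfCardEqFinrank hli
      (by rw [hcard, Module.finrank_fin_fun]))
    intro t
    rw [coe_basisOfLinearIndependentOfCardEqFinrank, hφ, h t, LinearMap.zero_apply]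
  funext m
  have := LinearMap.congr_fun hφ0 (Pi.single m 1)
  rw [hφ, ap_single] at this
  simpa using this

/-- for pairwise distinct `i,j,k`,
`s_j Ũ_{i,k} − s_i Ũ_{j,k} = −l_i U_{i,k} Ũ_{j,k} + l_j U_{j,k} Ũ_{i,k}
 − U_{j,k}(l_k)(s_k+1) Ũ_{i,j}`. -/
theorem stmt11 (n : ℕ) (l : Fin (n + 1) → Fin n → ℂ) (hl : Generic l)
    (u : Fin (n + 1) → Fin (n + 1) → Fin n → ℂ)
    (hu1 : ∀ a b, a ≠ b → ap (u a b) (l a) = 1)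
    (hu0 : ∀ a b, a ≠ b → ∀ k, k ≠ a → k ≠ b → ap (u a b) (l k) = 0)
    (i j k : Fin (n + 1)) (hij : i ≠ j) (hik : i ≠ k) (hjk : j ≠ k) :
    M (sp j) * Ut l u i k - M (sp i) * Ut l u j k =
      -(M (lfp (l i)) * Dv (u i k) * Ut l u j k) +
        M (lfp (l j)) * Dv (u j k) * Ut l u i k -
          ap (u j k) (l k) • ((M (sp k) + 1) * Ut l u i j) := by
  have e1 : ap (u i k) (l i) = 1 := hu1 i k hik
  have e2 : ap (u i k) (l j) = 0 := hu0 i k hik j (Ne.symm hij) hjk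
  have e3 : ap (u j k) (l j) = 1 := hu1 j k hjk
  have e4 : ap (u j k) (l i) = 0 := hu0 j k hjk i hij hik
  have e5 : ap (u i j) (l i) = 1 := hu1 i j hij
  have e6 : ap (u i j) (l k) = 0 := hu0 i j hij k (Ne.symm hik) (Ne.symm hjk)
  set α := ap (u i k) (l k) with hαdef
  set β := ap (u j k) (l k) with hβdef
  set γ := ap (u i j) (l j) with hγdef
  set w : Fin n → ℂ := β • u i k - α • u j k - β • u i j with hwdef
  -- w is orthogonal to all l m, m ≠ j
  have hap : ∀ t : (Finset.univ.erase j : Finset (Fin (n+1))), ap w (l t.1) = 0 := by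
    rintro ⟨m, hm⟩
    have hmj : m ≠ j := (Finset.mem_erase.mp hm).1
    rw [hwdef, ap_comb]
    by_cases hmi : m = i
    · subst hmi; rw [e1, e4, e5]; ring
    · by_cases hmk : m = k
      · subst hmk; rw [hαdef, hβdef, e6]; ring
      · rw [hu0 i k hik m hmi hmk, hu0 j k hjk m hmj hmk, hu0 i j hij m hmi hmj]; ring
  have hw : w = 0 := by
    refine ap_eq_zero_of_orth (fun t : (Finset.univ.erase j : Finset (Fin (n+1))) => l t.1)
      (hl _ ?_) ?_ hap
    · simp [Finset.card_erase_of_mem]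
    · simp [Finset.card_erase_of_mem]
  -- the scalar relation α + β γ = 0
  have hαβγ : α + β * γ = 0 := by
    have h0 : ap w (l j) = 0 := by rw [hw]; simp [ap]
    rw [hwdef, ap_comb, e2, e3] at h0
    linear_combination -h0
  -- the vector field relation
  have hD : ∀ q : P2 n, C β * Dv (u i k) q =
      C α * Dv (u j k) q + C β * Dv (u i j) q := by
    have hder : (β • (mkDerivation ℂ (cvec (u i k)) : Derivation ℂ (P2 n) (P2 n)) -
        α • mkDerivation ℂ (cvec (u j k)) - β • mkDerivation ℂ (cvec (u i j))) = 0 := by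
      apply derivation_ext
      intro v
      cases v with
      | inl m =>
        have hm := congrFun hw m
        simp only [hwdef, Pi.sub_apply, Pi.smul_apply, smul_eq_mul, Pi.zero_apply] at hm
        simp only [Derivation.sub_apply, Derivation.smul_apply, mkDerivation_X, cvec,
          Derivation.coe_zero, Pi.zero_apply, smul_eq_C_mul, ← C_mul, ← C_sub]
        rw [hm, map_zero]
      | inr m =>
        simp [Derivation.sub_apply, Derivation.smul_apply, mkDerivation_X, cvec]
    intro q
    have h2 := congrArg (fun D : Derivation ℂ (P2 n) (P2 n) => D q) hder
    simp only [Derivation.sub_apply, Derivation.smul_apply, Derivation.zero_apply] at h2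
    have h3 : β • Dv (u i k) q - α • Dv (u j k) q - β • Dv (u i j) q = 0 := by
      rw [Dv_eq (u i k), Dv_eq (u j k), Dv_eq (u i j)]
      exact h2
    rw [smul_eq_C_mul, smul_eq_C_mul, smul_eq_C_mul] at h3
    linear_combination h3
  have h2' : (C α : P2 n) = -(C β * C γ) := by
    rw [← C_mul, ← map_neg]
    congr 1
    linear_combination hαβγ
  -- main computation
  refine LinearMap.ext fun q => ?_
  have h3 : Dv (u i k) (Dv (u j k) q) = Dv (u j k) (Dv (u i k) q) := Dv_comm _ _ _
  simp only [Ut, LinearMap.sub_apply, LinearMap.add_apply, LinearMap.neg_apply,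
    LinearMap.smul_apply, Module.End.mul_apply, Module.End.one_apply, M_apply,
    map_sub, map_add, map_smul, smul_eq_C_mul, Dv_mul, Dv_lfp, Dv_sp, Dv_C,
    e1, e2, e3, e4, e5, e6, ← hαdef, ← hβdef, ← hγdef, map_one, map_zero]
  linear_combination (-(lfp (l i) * lfp (l j) * (sp k + 1))) * (hD q) +
    (-((sp k + 1) * lfp (l i) * sp j * q)) * h2' +
    (lfp (l i) * lfp (l j) * lfp (l k)) * h3
end
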